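/- arXiv:1805.06706 — 2 statements merged into one kernel-verified Lean document; each statement's English description precedes it below -/
import Mathlib

section
/- Let s be a positive integer coprime to m, let α ∈ 𝔽_{q^m}^k and β ∈ 𝔽_{q^m}^{n−k} satisfy supp_q(β) ⊆ supp_q(α)^×, and let X ∈ 𝔽_{q^m}^{k×(n−k)} satisfy Φ_s(X) = α^T β. (1) If rk_q(α) < k, then the code C_X is not MRD. (2) If rk_q(β) < n−k, then the code C_X is not MRD. -/
open Finset

/-- The explicit trace map of `𝔽_{q^m}/𝔽_q`: `Tr(x) = ∑_{i=0}^{m-1} x^{q^i}`. -/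
def fieldTrace (q m : ℕ) {L : Type*} [Field L] (x : L) : L :=
  ∑ i ∈ Finset.range m, x ^ q ^ i

/-- The `q`-rank of a vector with entries in `L`: the `K`-dimension of the
`K`-span of its entries. -/
noncomputable def rkq (K : Type*) {L : Type*} [Field K] [Field L] [Algebra K L]
    {ι : Type*} (v : ι → L) : ℕ :=
  Module.finrank K (Submodule.span K (Set.range v))

/-- The code `C_X`: the `L`-row space of the matrix `(I_k | X)`. -/
noncomputable def CX {L : Type*} [Field L] {k r : ℕ} (X : Matrix (Fin k) (Fin r) L) :
    Submodule L (Fin (k + r) → L) :=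
  Submodule.span L (Set.range fun i : Fin k =>
    Matrix.reindex (Equiv.refl (Fin k)) finSumFinEquiv
      (Matrix.fromCols (1 : Matrix (Fin k) (Fin k) L) X) i)

/-- The minimum rank distance of a linear code `C`. -/
noncomputable def minRankDist (K : Type*) {L : Type*} [Field K] [Field L] [Algebra K L]
    {n : ℕ} (C : Submodule L (Fin n → L)) : ℕ :=
  sInf {d : ℕ | ∃ c ∈ C, c ≠ 0 ∧ rkq K c = d}

/-- `C` is a generalized Gabidulin code of parameter `s` and dimension `k`:
it is the `L`-row space of an `s`-Moore matrix `M_{s,k}(g)` for some `g` of full `q`-rank. -/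
def IsGabidulin (K : Type*) {L : Type*} [Field K] [Field L] [Algebra K L]
    (q s k : ℕ) {n : ℕ} (C : Submodule L (Fin n → L)) : Prop :=
  ∃ g : Fin n → L, rkq K g = n ∧
    C = Submodule.span L (Set.range fun i : Fin k => fun j => g j ^ q ^ (s * (i : ℕ)))

/-- The map `Φ_s` applying `x ↦ x^{q^s} - x` entrywise to a matrix. -/
def PhiS (q s : ℕ) {L : Type*} [Field L] {k r : ℕ} (X : Matrix (Fin k) (Fin r) L) :
    Matrix (Fin k) (Fin r) L :=
  Matrix.of fun i j => X i j ^ q ^ s - X i j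

/-- A matrix is superregular if all of its minors are nonzero. -/
def Superregular {L : Type*} [Field L] {a b : ℕ} (M : Matrix (Fin a) (Fin b) L) : Prop :=
  ∀ (t : ℕ) (f : Fin t → Fin a) (g : Fin t → Fin b),
    StrictMono f → StrictMono g → (M.submatrix f g).det ≠ 0

/-!
If `rk_q(α) < k`, an `𝔽_q`-relation `λ` among the `αᵢ` annihilates `λ αᵀβ`, so every column
combination `yⱼ = ∑ λᵢ Xᵢⱼ` is fixed by `x ↦ x^{q^s}`. As `gcd(s, m) = 1`, this power of the
Frobenius generates `Gal(𝔽_{q^m}/𝔽_q)`, so `yⱼ ∈ 𝔽_q` and the codeword `λ (I_k | X)` has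
rank `1 ≤ r`.

If `rk_q(β) < r`, a relation `μ` among the `βⱼ` puts `∑ μⱼ Xᵢⱼ` in `𝔽_q` for every row `i`,
so `1, Xᵢ₁, …, Xᵢᵣ` are dependent and the `i`-th row of `(I_k | X)` has rank at most `r`.
In both cases the minimum distance is at most `r`.
-/

open Function Matrix

section RankOverSubfield

variable {K L : Type*} [Field K] [Field L] [Algebra K L]

theorem rkq_le_card {ι : Type*} [Fintype ι] (v : ι → L) : rkq K v ≤ Fintype.card ι :=
  finrank_range_le_card v

theorem rkq_lt_card_iff {ι : Type*} [Fintype ι] {v : ι → L} :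
    rkq K v < Fintype.card ι ↔ ¬LinearIndependent K v := by
  rw [linearIndependent_iff_card_le_finrank_span, not_le]
  rfl

theorem rkq_le_rkq_of_range_subset_span {ι ι' : Type*} [Finite ι'] {v : ι → L} {w : ι' → L}
    (h : Set.range v ⊆ Submodule.span K (Set.range w)) : rkq K v ≤ rkq K w :=
  have := Module.Finite.span_of_finite K (Set.finite_range w)
  Submodule.finrank_mono (Submodule.span_le.mpr h)

theorem rkq_le_one_of_range_subset {ι : Type*} {v : ι → L}
    (h : Set.range v ⊆ Set.range (algebraMap K L)) : rkq K v ≤ 1 := by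
  calc rkq K v ≤ rkq K (fun _ : Fin 1 => (1 : L)) := rkq_le_rkq_of_range_subset_span ?_
    _ ≤ 1 := rkq_le_card _
  rintro _ ⟨i, rfl⟩
  obtain ⟨a, ha⟩ := h ⟨i, rfl⟩
  rw [← ha, Algebra.algebraMap_eq_smul_one]
  exact Submodule.smul_mem _ _ (Submodule.subset_span ⟨0, rfl⟩)

theorem rkq_cons_one_le {r : ℕ} {y : Fin r → L} {c : Fin r → K} (hc : c ≠ 0)
    (h : ∑ j, c j • y j ∈ Set.range (algebraMap K L)) :
    rkq K (Fin.cons 1 y : Fin (r + 1) → L) ≤ r := by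
  obtain ⟨u, hu⟩ := h
  obtain ⟨j, hj⟩ := Function.ne_iff.mp hc
  have hdep : ¬LinearIndependent K (Fin.cons 1 y : Fin (r + 1) → L) := by
    refine Fintype.not_linearIndependent_iff.mpr ⟨Fin.cons (-u) c, ?_, j.succ, by simpa using hj⟩
    simp only [Fin.sum_univ_succ, Fin.cons_zero, Fin.cons_succ, ← hu,
      Algebra.algebraMap_eq_smul_one, neg_smul, neg_add_cancel]
  simpa [Nat.lt_succ_iff] using rkq_lt_card_iff.mpr hdep

theorem minRankDist_le_rkq {n : ℕ} {C : Submodule L (Fin n → L)} {c : Fin n → L}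
    (hc : c ∈ C) (hc0 : c ≠ 0) : minRankDist K C ≤ rkq K c :=
  Nat.sInf_le ⟨c, hc, hc0, rfl⟩

end RankOverSubfield

theorem sum_smul_pow_card_pow {K R : Type*} [Field K] [Fintype K] [CommRing R] [Algebra K R]
    {ι : Type*} [Fintype ι] (s : ℕ) (c : ι → K) (y : ι → R) :
    (∑ i, c i • y i) ^ Fintype.card K ^ s = ∑ i, c i • y i ^ Fintype.card K ^ s := by
  have h := map_sum (FiniteField.frobeniusAlgHom K R ^ s).toLinearMap (fun i => c i • y i) univ
  simp only [AlgHom.toLinearMap_apply, map_smul, AlgHom.coe_pow, FiniteField.coe_frobeniusAlgHom,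
    pow_iterate] at h
  exact h

section FrobeniusFixedPoints

variable {K L : Type*} [Field K] [Field L] [Algebra K L] [Fintype K] [Fintype L]

theorem mem_range_algebraMap_of_pow_card_pow_eq_self {s : ℕ}
    (hs : s.Coprime (Module.finrank K L)) {x : L} (hx : x ^ Fintype.card K ^ s = x) :
    x ∈ Set.range (algebraMap K L) := by
  have hper_s : IsPeriodicPt (· ^ Fintype.card K) s x := by
    rw [IsPeriodicPt, IsFixedPt, pow_iterate]
    exact hx
  have hper_m : IsPeriodicPt (· ^ Fintype.card K) (Module.finrank K L) x := by
    rw [IsPeriodicPt, IsFixedPt, pow_iterate, ← Module.card_eq_pow_finrank]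
    exact FiniteField.pow_card x
  have hfix : IsFixedPt (· ^ Fintype.card K) x := by
    have h := hper_s.gcd hper_m
    rwa [hs.gcd_eq_one] at h
  rw [IsGalois.mem_range_algebraMap_iff_fixed]
  intro f
  obtain ⟨n, rfl⟩ := (FiniteField.bijective_frobeniusAlgEquivOfAlgebraic_pow K L).2 f
  rw [AlgEquiv.coe_pow, FiniteField.coe_frobeniusAlgEquivOfAlgebraic]
  exact hfix.iterate n

theorem sum_smul_mem_range_algebraMap {ι : Type*} [Fintype ι] {s : ℕ}
    (hs : s.Coprime (Module.finrank K L)) {y a : ι → L} {b : L}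
    (hy : ∀ i, y i ^ Fintype.card K ^ s - y i = a i * b) {c : ι → K}
    (hc : ∑ i, c i • a i = 0) : ∑ i, c i • y i ∈ Set.range (algebraMap K L) := by
  apply mem_range_algebraMap_of_pow_card_pow_eq_self hs
  rw [← sub_eq_zero, sum_smul_pow_card_pow, ← Finset.sum_sub_distrib]
  simp_rw [← smul_sub, hy, ← smul_mul_assoc, ← Finset.sum_mul, hc, zero_mul]

end FrobeniusFixedPoints

section Code

variable {L : Type*} [Field L] {k r : ℕ}

def encodeCX (X : Matrix (Fin k) (Fin r) L) (w : Fin k → L) : Fin (k + r) → L :=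
  Sum.elim w (w ᵥ* X) ∘ finSumFinEquiv.symm

theorem encodeCX_mem_CX (X : Matrix (Fin k) (Fin r) L) (w : Fin k → L) :
    encodeCX X w ∈ CX X := by
  have h : encodeCX X w = w ᵥ* reindex (Equiv.refl (Fin k)) finSumFinEquiv
      (fromCols (1 : Matrix (Fin k) (Fin k) L) X) := by
    rw [reindex_apply, submatrix_vecMul_equiv, vecMul_fromCols]
    simp [encodeCX]
  rw [h, vecMul_eq_sum]
  exact Submodule.sum_mem _ fun i _ =>
    Submodule.smul_mem _ _ (Submodule.subset_span (Set.mem_range_self i))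

theorem encodeCX_ne_zero (X : Matrix (Fin k) (Fin r) L) {w : Fin k → L} (hw : w ≠ 0) :
    encodeCX X w ≠ 0 := by
  intro h
  apply hw
  funext i
  simpa [encodeCX] using congrFun h (finSumFinEquiv (Sum.inl i))

theorem range_encodeCX (X : Matrix (Fin k) (Fin r) L) (w : Fin k → L) :
    Set.range (encodeCX X w) = Set.range w ∪ Set.range (w ᵥ* X) := by
  rw [encodeCX, finSumFinEquiv.symm.surjective.range_comp, Set.Sum.elim_range]

theorem range_encodeCX_single_subset_span (K : Type*) [Field K] [Algebra K L]
    (X : Matrix (Fin k) (Fin r) L) (i : Fin k) :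
    Set.range (encodeCX X (Pi.single i 1)) ⊆
      Submodule.span K (Set.range (Fin.cons 1 (X i) : Fin (r + 1) → L)) := by
  rw [range_encodeCX, single_vecMul, one_smul, Set.union_subset_iff]
  constructor
  · rintro _ ⟨i', rfl⟩
    rw [Pi.single_apply]
    split_ifs
    · exact Submodule.subset_span (Set.mem_range_self (0 : Fin (r + 1)))
    · exact Submodule.zero_mem _
  · rintro _ ⟨j, rfl⟩
    exact Submodule.subset_span ⟨j.succ, rfl⟩

end Code

theorem stmt11_general {K L : Type*} [Field K] [Field L] [Algebra K L] [Fintype K] [Fintype L]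
    (q m k r s : ℕ) (hq : Fintype.card K = q) (hm : Module.finrank K L = m)
    (hk : 0 < k) (hr : 0 < r) (hsm : Nat.Coprime s m)
    (α : Fin k → L) (β : Fin r → L)
    (X : Matrix (Fin k) (Fin r) L) (hX : PhiS q s X = Matrix.vecMulVec α β) :
    (rkq K α < k → minRankDist K (CX X) ≠ r + 1) ∧
    (rkq K β < r → minRankDist K (CX X) ≠ r + 1) := by
  subst hq hm
  have hXij (i : Fin k) (j : Fin r) : X i j ^ Fintype.card K ^ s - X i j = α i * β j := by
    simpa [PhiS, vecMulVec_apply] using congrFun (congrFun hX i) j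
  constructor
  · intro hα
    obtain ⟨c, hc, i, hi⟩ := Fintype.not_linearIndependent_iff.mp
      ((rkq_lt_card_iff (v := α)).mp (by simpa using hα))
    set w : Fin k → L := algebraMap K L ∘ c
    have hw : w ≠ 0 := fun h => hi (by simpa [w] using congrFun h i)
    have hrk : rkq K (encodeCX X w) ≤ 1 := by
      refine rkq_le_one_of_range_subset ?_
      rw [range_encodeCX, Set.union_subset_iff]
      refine ⟨Set.range_comp_subset_range _ _, ?_⟩
      rintro _ ⟨j, rfl⟩
      simpa [w, vecMul, dotProduct, Algebra.smul_def] using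
        sum_smul_mem_range_algebraMap hsm (fun i => hXij i j) hc
    have := minRankDist_le_rkq (K := K) (encodeCX_mem_CX X w) (encodeCX_ne_zero X hw)
    omega
  · intro hβ
    obtain ⟨c, hc, j, hj⟩ := Fintype.not_linearIndependent_iff.mp
      ((rkq_lt_card_iff (v := β)).mp (by simpa using hβ))
    let i : Fin k := ⟨0, hk⟩
    have hrow : ∑ j, c j • X i j ∈ Set.range (algebraMap K L) :=
      sum_smul_mem_range_algebraMap hsm (fun j => (hXij i j).trans (mul_comm _ _)) hc
    have hrk : rkq K (encodeCX X (Pi.single i 1)) ≤ r :=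
      (rkq_le_rkq_of_range_subset_span (range_encodeCX_single_subset_span K X i)).trans
        (rkq_cons_one_le (Function.ne_iff.mpr ⟨j, hj⟩) hrow)
    have hw : (Pi.single i 1 : Fin k → L) ≠ 0 := Pi.single_ne_zero_iff.mpr one_ne_zero
    have := minRankDist_le_rkq (K := K) (encodeCX_mem_CX X _) (encodeCX_ne_zero X hw)
    omega

/-- let `supp_q(β) ⊆ supp_q(α)^×` and `Φ_s(X) = αᵀβ`. If `rk_q(α) < k` or
`rk_q(β) < r`, then `C_X` is not MRD. -/
theorem stmt11 {K L : Type*} [Field K] [Field L] [Algebra K L] [Fintype K] [Fintype L]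
    (q m k r s : ℕ) (hq : Fintype.card K = q) (hm : Module.finrank K L = m)
    (hk : 0 < k) (hr : 0 < r) (hnm : k + r ≤ m) (hs : 0 < s) (hsm : Nat.Coprime s m)
    (α : Fin k → L) (β : Fin r → L)
    (hsupp : ∀ x ∈ Submodule.span K (Set.range β), ∀ y ∈ Submodule.span K (Set.range α),
      fieldTrace q m (y * x) = 0)
    (X : Matrix (Fin k) (Fin r) L) (hX : PhiS q s X = Matrix.vecMulVec α β) :
    (rkq K α < k → minRankDist K (CX X) ≠ r + 1) ∧
    (rkq K β < r → minRankDist K (CX X) ≠ r + 1) :=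
  stmt11_general q m k r s hq hm hk hr hsm α β X hX
end

section
/- For all integers 0 < k < n ≤ m and every positive integer s coprime to m, there exists a matrix X ∈ 𝔽_{q^m}^{k×(n−k)} which is a Hankel matrix (i.e., X_{i,j} depends only on i+j: there is a vector a such that X_{i,j} = a_{i+j−2}) such that the code C_X is a generalized Gabidulin code of parameter s. -/
open Finset

/-!
Let `σ = Frob^s`, which generates `Gal(L/K)` because `gcd(s, m) = 1`, and let `ρ` be a primitive
element of `L/K`. The kernel of `σ - 1` is `K`, so its image is a hyperplane and some `θ ≠ 0`
satisfies `ρ^t θ = σ(a_t) - a_t` for all `t < n - 1`; take `X = (a_{i+j})`. Applying `σ` to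
`(I_k | X)` adds the rank-one matrix `(ρ^i)_i ⊗ (0 | ρ^j θ)`. Let `g₀` be the coefficient vector of
`P = ∏_{u=1}^{k-1} (x - σ^{-u} ρ)`; for `0 < i < k` the vector `σ^i(g₀)` is the coefficient vector
of a polynomial vanishing at `ρ`, so it annihilates that rank-one correction and
`g = g₀ (I_k | X)` satisfies `M_{s,k}(g) = M_{s,k}(g₀) (I_k | X)`. The square Moore matrix
`M_{s,k}(g₀)` is invertible: multiplied by the Vandermonde matrix of the `σ^j ρ` it becomes the
triangular matrix `(σ^i P)(σ^j ρ)`. Hence `C_X` is the row space of `M_{s,k}(g)`, and `g` has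
full `q`-rank since a `K`-relation among its entries is killed by `(I_k | X)`, and then by `σ - 1`.
-/

open Polynomial
open scoped Matrix

theorem Matrix.span_row_mul_of_isUnit {R : Type*} [CommRing R] {m n : Type*} [Fintype m]
    [DecidableEq m] {A : Matrix m m R} (hA : IsUnit A) (G : Matrix m n R) :
    Submodule.span R (Set.range (A * G).row) = Submodule.span R (Set.range G.row) := by
  have hcomp : (A * G).vecMulLinear = G.vecMulLinear ∘ₗ A.vecMulLinear :=
    LinearMap.ext fun v => (Matrix.vecMul_vecMul v A G).symm
  rw [← range_vecMulLinear, ← range_vecMulLinear, hcomp,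
    LinearMap.range_comp_of_range_eq_top _
      (LinearMap.range_eq_top.mpr (Matrix.vecMul_surjective_iff_isUnit.mpr hA))]

theorem exists_ne_zero_forall_pow_mul_mem {K L : Type*} [Field K] [Field L] [Algebra K L]
    [FiniteDimensional K L] (W : Submodule K L) (ρ : L) {N : ℕ}
    (hN : N * Module.finrank K (L ⧸ W) < Module.finrank K L) :
    ∃ θ ≠ 0, ∀ t < N, ρ ^ t * θ ∈ W := by
  let f : L →ₗ[K] Fin N → L ⧸ W :=
    LinearMap.pi fun t => W.mkQ ∘ₗ LinearMap.mulLeft K (ρ ^ (t : ℕ))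
  have hf : LinearMap.ker f ≠ ⊥ :=
    LinearMap.ker_ne_bot_of_finrank_lt (by simpa [Module.finrank_pi_fintype] using hN)
  obtain ⟨θ, hθ, hθ0⟩ := Submodule.exists_mem_ne_zero_of_ne_bot hf
  refine ⟨θ, hθ0, fun t ht => ?_⟩
  simpa [f] using congrFun (LinearMap.mem_ker.mp hθ) ⟨t, ht⟩

theorem AlgEquiv.pow_apply_zpow_apply {K L : Type*} [Field K] [Field L] [Algebra K L]
    (σ : L ≃ₐ[K] L) (i : ℕ) (z : ℤ) (x : L) : (σ ^ i) ((σ ^ z) x) = (σ ^ (i + z)) x := by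
  rw [← AlgEquiv.mul_apply, ← zpow_natCast, ← _root_.zpow_add]

theorem AlgEquiv.finrank_quotient_range_sub_id_le_one {K L : Type*} [Field K] [Field L]
    [Algebra K L] [FiniteDimensional K L] (σ : L ≃ₐ[K] L)
    (hσ : ∀ x, σ x = x → x ∈ Set.range (algebraMap K L)) :
    Module.finrank K (L ⧸ LinearMap.range (σ.toLinearMap - LinearMap.id)) ≤ 1 := by
  have hker : LinearMap.ker (σ.toLinearMap - LinearMap.id) ≤ K ∙ (1 : L) := by
    intro x hx
    obtain ⟨c, rfl⟩ := hσ x (sub_eq_zero.mp hx)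
    exact Submodule.mem_span_singleton.mpr ⟨c, (Algebra.algebraMap_eq_smul_one c).symm⟩
  have hquot :=
    Submodule.finrank_quotient_add_finrank (LinearMap.range (σ.toLinearMap - LinearMap.id))
  have hrank := (σ.toLinearMap - LinearMap.id).finrank_range_add_finrank_ker
  have hker1 := (Submodule.finrank_mono hker).trans (finrank_span_singleton one_ne_zero).le
  omega

theorem AlgEquiv.exists_apply_eq_add_pow_mul {K L : Type*} [Field K] [Field L] [Algebra K L]
    [FiniteDimensional K L] (σ : L ≃ₐ[K] L)
    (hσ : ∀ x, σ x = x → x ∈ Set.range (algebraMap K L)) (ρ : L) {N : ℕ}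
    (hN : N < Module.finrank K L) :
    ∃ θ ≠ 0, ∃ a : ℕ → L, ∀ t < N, σ (a t) = a t + ρ ^ t * θ := by
  obtain ⟨θ, hθ, hθW⟩ := exists_ne_zero_forall_pow_mul_mem
    (LinearMap.range (σ.toLinearMap - LinearMap.id)) ρ
    (calc N * _ ≤ N * 1 := Nat.mul_le_mul_left _ (σ.finrank_quotient_range_sub_id_le_one hσ)
      _ < _ := by omega)
  have hpre : ∀ t, ∃ x : L, t < N → σ x = x + ρ ^ t * θ := fun t => by
    by_cases ht : t < N
    · obtain ⟨x, hx⟩ := hθW t ht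
      exact ⟨x, fun _ => by rw [← hx]; simp⟩
    · exact ⟨0, fun h => absurd h ht⟩
  choose a ha using hpre
  exact ⟨θ, hθ, a, ha⟩

namespace PowerBasis

variable {K L : Type*} [Field K] [Field L] [Algebra K L] (pb : PowerBasis K L)

theorem pow_apply_gen_ne_gen (σ : L ≃ₐ[K] L) {n : ℕ} (hn : 0 < n) (hlt : n < orderOf σ) :
    (σ ^ n) pb.gen ≠ pb.gen := fun h =>
  (Nat.le_of_dvd hn (orderOf_dvd_of_pow_eq_one (AlgEquiv.coe_toAlgHom_injective
    (pb.algHom_ext h)))).not_gt hlt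

theorem linearIndependent_pow_fin {r : ℕ} (hr : r ≤ Module.finrank K L) :
    LinearIndependent K fun j : Fin r => pb.gen ^ (j : ℕ) := by
  have := pb.basis.linearIndependent.comp _
    (Fin.castLE_injective (show r ≤ pb.dim by rwa [← pb.finrank]))
  rwa [pb.coe_basis] at this

end PowerBasis

theorem mem_range_algebraMap_of_zpowers_eq_top {K L : Type*} [Field K] [Field L] [Algebra K L]
    [FiniteDimensional K L] [IsGalois K L] {σ : L ≃ₐ[K] L} (hσ : Subgroup.zpowers σ = ⊤) {x : L}
    (hx : σ x = x) : x ∈ Set.range (algebraMap K L) := by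
  have : Subgroup.zpowers σ ≤ MulAction.stabilizer (L ≃ₐ[K] L) x :=
    Subgroup.zpowers_le.mpr hx
  rw [hσ] at this
  exact (IsGalois.mem_range_algebraMap_iff_fixed x).mpr fun f => this (Subgroup.mem_top f)

namespace FiniteField

variable (K L : Type*) [Field K] [Fintype K] [Field L] [Finite L] [Algebra K L]

theorem frobeniusAlgEquivOfAlgebraic_pow_apply (n : ℕ) (x : L) :
    (frobeniusAlgEquivOfAlgebraic K L ^ n) x = x ^ Fintype.card K ^ n := by
  rw [AlgEquiv.coe_pow, coe_frobeniusAlgEquivOfAlgebraic_iterate]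

variable {K L}

theorem orderOf_frobeniusAlgEquivOfAlgebraic_pow {s : ℕ} (hs : s.Coprime (Module.finrank K L)) :
    orderOf (frobeniusAlgEquivOfAlgebraic K L ^ s) = Module.finrank K L := by
  rw [Nat.Coprime.orderOf_pow (by rwa [orderOf_frobeniusAlgEquivOfAlgebraic, Nat.coprime_comm]),
    orderOf_frobeniusAlgEquivOfAlgebraic]

theorem zpowers_frobeniusAlgEquivOfAlgebraic_pow {s : ℕ} (hs : s.Coprime (Module.finrank K L)) :
    Subgroup.zpowers (frobeniusAlgEquivOfAlgebraic K L ^ s) = ⊤ := by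
  have := Fintype.ofFinite L
  refine Subgroup.eq_top_of_card_eq _ ?_
  rw [Nat.card_zpowers, orderOf_frobeniusAlgEquivOfAlgebraic_pow hs,
    IsGalois.card_aut_eq_finrank]

end FiniteField

section HankelConstruction

variable {K L : Type*} [Field K] [Field L] [Algebra K L] {k r : ℕ}

def mooreMatrix {ι : Type*} (σ : L ≃ₐ[K] L) (k : ℕ) (g : ι → L) : Matrix (Fin k) ι L :=
  Matrix.of fun i j => (σ ^ (i : ℕ)) (g j)

def hankel (k r : ℕ) (a : ℕ → L) : Matrix (Fin k) (Fin r) L :=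
  Matrix.of fun i j => a (i + j)

def systematicMatrix (X : Matrix (Fin k) (Fin r) L) : Matrix (Fin k) (Fin (k + r)) L :=
  Matrix.reindex (Equiv.refl (Fin k)) finSumFinEquiv (Matrix.fromCols 1 X)

@[simp]
theorem systematicMatrix_castAdd (X : Matrix (Fin k) (Fin r) L) (l i : Fin k) :
    systematicMatrix X l (Fin.castAdd r i) = (1 : Matrix (Fin k) (Fin k) L) l i := by
  simp [systematicMatrix]

@[simp]
theorem systematicMatrix_natAdd (X : Matrix (Fin k) (Fin r) L) (l : Fin k) (j : Fin r) :
    systematicMatrix X l (Fin.natAdd k j) = X l j := by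
  simp [systematicMatrix]

theorem vecMul_systematicMatrix_castAdd (h : Fin k → L) (X : Matrix (Fin k) (Fin r) L)
    (i : Fin k) :
    (h ᵥ* systematicMatrix X) (Fin.castAdd r i) = h i := by
  simp [Matrix.vecMul, dotProduct, Matrix.one_apply]

theorem vecMul_systematicMatrix_natAdd (h : Fin k → L) (X : Matrix (Fin k) (Fin r) L)
    (j : Fin r) :
    (h ᵥ* systematicMatrix X) (Fin.natAdd k j) = (h ᵥ* X) j := by
  simp [Matrix.vecMul, dotProduct]

theorem systematicMatrix_mulVec (X : Matrix (Fin k) (Fin r) L) (w : Fin (k + r) → L) :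
    systematicMatrix X *ᵥ w = w ∘ Fin.castAdd r + X *ᵥ (w ∘ Fin.natAdd k) := by
  ext l
  simp [Matrix.mulVec, dotProduct, Fin.sum_univ_add, Matrix.one_apply]

end HankelConstruction

section HankelTwist

variable {K L : Type*} [Field K] [Field L] [Algebra K L] {k r : ℕ} (σ : L ≃ₐ[K] L)
  {ρ θ : L} {a : ℕ → L}

theorem comp_vecMul_systematicMatrix_hankel
    (ha : ∀ t < k + r - 1, σ (a t) = a t + ρ ^ t * θ) {h : Fin k → L}
    (hh : ∑ l, σ (h l) * ρ ^ (l : ℕ) = 0) :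
    ⇑σ ∘ (h ᵥ* systematicMatrix (hankel k r a)) =
      (⇑σ ∘ h) ᵥ* systematicMatrix (hankel k r a) := by
  funext j
  refine Fin.addCases (fun i => ?_) (fun j => ?_) j
  · simp [vecMul_systematicMatrix_castAdd]
  · rw [Function.comp_apply, vecMul_systematicMatrix_natAdd, vecMul_systematicMatrix_natAdd]
    simp only [Matrix.vecMul, dotProduct, hankel, Matrix.of_apply, map_sum, map_mul,
      Function.comp_apply]
    calc ∑ l : Fin k, σ (h l) * σ (a (l + j))
        = ∑ l : Fin k, σ (h l) * a (l + j) +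
            (∑ l, σ (h l) * ρ ^ (l : ℕ)) * (ρ ^ (j : ℕ) * θ) := by
          rw [Finset.sum_mul, ← Finset.sum_add_distrib]
          refine Finset.sum_congr rfl fun l _ => ?_
          rw [ha _ (by omega), pow_add]
          ring
      _ = ∑ l : Fin k, σ (h l) * a (l + j) := by rw [hh, zero_mul, add_zero]

theorem mooreMatrix_vecMul_systematicMatrix_hankel
    (ha : ∀ t < k + r - 1, σ (a t) = a t + ρ ^ t * θ) {h : Fin k → L}
    (hh : ∀ i, 0 < i → i < k → ∑ l, (σ ^ i) (h l) * ρ ^ (l : ℕ) = 0) :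
    mooreMatrix σ k (h ᵥ* systematicMatrix (hankel k r a)) =
      mooreMatrix σ k h * systematicMatrix (hankel k r a) := by
  have hrow : ∀ i < k, ⇑(σ ^ i) ∘ (h ᵥ* systematicMatrix (hankel k r a)) =
      (⇑(σ ^ i) ∘ h) ᵥ* systematicMatrix (hankel k r a) := by
    intro i hi
    induction i with
    | zero => rfl
    | succ i ih =>
      have hpow : ⇑(σ ^ (i + 1)) = ⇑σ ∘ ⇑(σ ^ i) := by rw [pow_succ']; rfl
      rw [hpow, Function.comp_assoc, ih (by omega),
        comp_vecMul_systematicMatrix_hankel σ ha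
          (by simpa only [hpow, Function.comp_apply] using hh (i + 1) (by omega) hi)]
      rfl
  ext i j
  exact congrFun (hrow i i.isLt) j

end HankelTwist

theorem Polynomial.map_eval_eq_sum_fin {R S : Type*} [CommSemiring R] [CommSemiring S]
    (τ : R →+* S) {p : R[X]} {k : ℕ} (hp : p.natDegree < k) (y : R) :
    τ (p.eval y) = ∑ l : Fin k, τ (p.coeff l) * τ y ^ (l : ℕ) := by
  rw [eval_eq_sum_range' hp, map_sum, ← Fin.sum_univ_eq_sum_range]
  simp only [map_mul, map_pow]

section ConjugatesPoly

variable {K L : Type*} [Field K] [Field L] [Algebra K L] (σ : L ≃ₐ[K] L) (ρ : L) (k : ℕ)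

noncomputable def conjugatesPoly : L[X] :=
  ∏ u ∈ Finset.range (k - 1), (X - C ((σ ^ (-(u + 1 : ℤ))) ρ))

theorem natDegree_conjugatesPoly : (conjugatesPoly σ ρ k).natDegree = k - 1 := by
  rw [conjugatesPoly, natDegree_prod_of_monic _ _ fun u _ => monic_X_sub_C _]
  simp

variable {k}

theorem eval_conjugatesPoly_zpow_neg {n : ℕ} (hn : 0 < n) (hnk : n < k) :
    (conjugatesPoly σ ρ k).eval ((σ ^ (-n : ℤ)) ρ) = 0 := by
  rw [conjugatesPoly, eval_prod]
  refine Finset.prod_eq_zero (i := n - 1) (Finset.mem_range.mpr (by omega)) ?_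
  rw [eval_sub, eval_X, eval_C, sub_eq_zero]
  congr 3
  omega

theorem eval_conjugatesPoly_ne_zero (hρ : ∀ n, 0 < n → n < k → (σ ^ n) ρ ≠ ρ) :
    (conjugatesPoly σ ρ k).eval ρ ≠ 0 := by
  rw [conjugatesPoly, eval_prod, Finset.prod_ne_zero_iff]
  intro u hu
  rw [eval_sub, eval_X, eval_C, sub_ne_zero]
  intro h
  refine hρ (u + 1) (by omega) (by simp at hu; omega) ?_
  conv_lhs => rw [h, ← AlgEquiv.mul_apply, ← zpow_natCast, ← zpow_add]
  simp

theorem pow_apply_eval_conjugatesPoly (hk : 0 < k) (i : ℕ) (z : ℤ) :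
    (σ ^ i) ((conjugatesPoly σ ρ k).eval ((σ ^ z) ρ)) =
      ∑ l : Fin k, (σ ^ i) ((conjugatesPoly σ ρ k).coeff l) * ((σ ^ (i + z)) ρ) ^ (l : ℕ) := by
  rw [← σ.pow_apply_zpow_apply]
  exact Polynomial.map_eval_eq_sum_fin ((σ ^ i : L ≃ₐ[K] L) : L →+* L)
    (by rw [natDegree_conjugatesPoly]; omega) _

theorem sum_pow_apply_coeff_conjugatesPoly_mul_pow {i : ℕ} (hi : 0 < i) (hik : i < k) :
    ∑ l : Fin k, (σ ^ i) ((conjugatesPoly σ ρ k).coeff l) * ρ ^ (l : ℕ) = 0 := by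
  have h := pow_apply_eval_conjugatesPoly σ ρ (k := k) (by omega) i (-i)
  rwa [add_neg_cancel, zpow_zero, AlgEquiv.one_apply, eval_conjugatesPoly_zpow_neg σ ρ hi hik,
    map_zero, eq_comm] at h

theorem isUnit_mooreMatrix_coeff_conjugatesPoly
    (hρ : ∀ n, 0 < n → n < k → (σ ^ n) ρ ≠ ρ) :
    IsUnit (mooreMatrix σ k fun l : Fin k => (conjugatesPoly σ ρ k).coeff l) := by
  set A := mooreMatrix σ k fun l : Fin k => (conjugatesPoly σ ρ k).coeff l
  let V : Matrix (Fin k) (Fin k) L := Matrix.of fun l j => ((σ ^ (j : ℕ)) ρ) ^ (l : ℕ)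
  have hAV : ∀ i j : Fin k, (A * V) i j =
      (σ ^ (i : ℕ)) ((conjugatesPoly σ ρ k).eval ((σ ^ ((j : ℤ) - i)) ρ)) := by
    intro i j
    rw [pow_apply_eval_conjugatesPoly σ ρ i.pos]
    simp [A, V, mooreMatrix, Matrix.mul_apply]
  have htri : (A * V).IsUpperTriangular := by
    intro i j hji
    rw [hAV, show (j : ℤ) - i = -((i - j : ℕ) : ℤ) by simp at hji; omega,
      eval_conjugatesPoly_zpow_neg σ ρ (by simp at hji; omega) (by omega), map_zero]
  have hdet : (A * V).det ≠ 0 := by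
    rw [Matrix.det_of_isUpperTriangular htri, Finset.prod_ne_zero_iff]
    intro i _
    rw [hAV, sub_self, zpow_zero, AlgEquiv.one_apply]
    exact (_root_.map_ne_zero _).mpr (eval_conjugatesPoly_ne_zero σ ρ hρ)
  rw [Matrix.isUnit_iff_isUnit_det, isUnit_iff_ne_zero]
  exact left_ne_zero_of_mul (Matrix.det_mul A V ▸ hdet)

end ConjugatesPoly

section HankelRank

variable {K L : Type*} [Field K] [Field L] [Algebra K L] {k r : ℕ} (σ : L ≃ₐ[K] L)
  {ρ θ : L} {a : ℕ → L}

theorem eq_zero_of_algebraMap_add_sum_mul_eq_zero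
    (ha : ∀ t < k + r - 1, σ (a t) = a t + ρ ^ t * θ)
    (hk : 0 < k) (hθ : θ ≠ 0)
    (hρ : LinearIndependent K fun j : Fin r => ρ ^ (j : ℕ)) {c : K} {v : Fin r → K}
    (h : algebraMap K L c + ∑ j : Fin r, a j * algebraMap K L (v j) = 0) : v = 0 := by
  have hσ := congrArg (fun x => σ x - x) h
  simp only [map_add, map_sum, map_mul, AlgEquiv.commutes, map_zero, sub_zero,
    add_sub_add_left_eq_sub, ← Finset.sum_sub_distrib, ← sub_mul] at hσ
  have hsum : θ * ∑ j : Fin r, v j • ρ ^ (j : ℕ) = 0 := by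
    rw [← hσ, Finset.mul_sum]
    refine Finset.sum_congr rfl fun j _ => ?_
    rw [ha j (by omega), Algebra.smul_def]
    ring
  exact funext (Fintype.linearIndependent_iff.mp hρ v ((mul_eq_zero.mp hsum).resolve_left hθ))

theorem linearIndependent_vecMul_systematicMatrix_hankel
    (ha : ∀ t < k + r - 1, σ (a t) = a t + ρ ^ t * θ)
    (hk : 0 < k) (hθ : θ ≠ 0)
    (hρ : LinearIndependent K fun j : Fin r => ρ ^ (j : ℕ)) {h : Fin k → L}
    (hA : IsUnit (mooreMatrix σ k h))
    (hM : mooreMatrix σ k (h ᵥ* systematicMatrix (hankel k r a)) =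
      mooreMatrix σ k h * systematicMatrix (hankel k r a)) :
    LinearIndependent K (h ᵥ* systematicMatrix (hankel k r a)) := by
  rw [Fintype.linearIndependent_iff]
  intro w hw
  set w' : Fin (k + r) → L := algebraMap K L ∘ w
  have hMw : mooreMatrix σ k (h ᵥ* systematicMatrix (hankel k r a)) *ᵥ w' = 0 := by
    ext i
    have := congrArg (σ ^ (i : ℕ)) hw
    rw [map_sum, map_zero] at this
    simp only [mooreMatrix, Matrix.mulVec, dotProduct, Matrix.of_apply, Pi.zero_apply, w',
      Function.comp_apply, ← this]
    refine Finset.sum_congr rfl fun j _ => ?_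
    rw [Algebra.smul_def, map_mul, AlgEquiv.commutes, mul_comm]
  rw [hM, ← Matrix.mulVec_mulVec, ← Matrix.mulVec_zero (mooreMatrix σ k h)] at hMw
  have hG := Matrix.mulVec_injective_iff_isUnit.mpr hA hMw
  rw [systematicMatrix_mulVec] at hG
  have hR : w ∘ Fin.natAdd k = 0 := by
    refine eq_zero_of_algebraMap_add_sum_mul_eq_zero σ ha hk hθ hρ
      (c := w (Fin.castAdd r ⟨0, hk⟩)) ?_
    simpa [hankel, Matrix.mulVec, dotProduct, w', mul_comm] using congrFun hG ⟨0, hk⟩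
  have hL : w ∘ Fin.castAdd r = 0 := by
    ext l
    simpa [w', Function.comp_assoc, hR] using congrFun hG l
  exact fun j => Fin.addCases (congrFun hL) (congrFun hR) j

end HankelRank

theorem exists_linearIndependent_span_mooreMatrix_eq_CX_hankel {K L : Type*} [Field K]
    [Field L] [Algebra K L] {k r : ℕ} (σ : L ≃ₐ[K] L) {ρ θ : L} {a : ℕ → L}
    (ha : ∀ t < k + r - 1, σ (a t) = a t + ρ ^ t * θ) (hk : 0 < k) (hθ : θ ≠ 0)
    (hρk : ∀ n, 0 < n → n < k → (σ ^ n) ρ ≠ ρ)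
    (hρr : LinearIndependent K fun j : Fin r => ρ ^ (j : ℕ)) :
    ∃ g : Fin (k + r) → L, LinearIndependent K g ∧
      CX (hankel k r a) = Submodule.span L (Set.range (mooreMatrix σ k g).row) := by
  set h := fun l : Fin k => (conjugatesPoly σ ρ k).coeff l
  have hA := isUnit_mooreMatrix_coeff_conjugatesPoly σ ρ hρk
  have hM := mooreMatrix_vecMul_systematicMatrix_hankel σ ha (h := h)
    fun i hi hik => sum_pow_apply_coeff_conjugatesPoly_mul_pow σ ρ hi hik
  refine ⟨h ᵥ* systematicMatrix (hankel k r a),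
    linearIndependent_vecMul_systematicMatrix_hankel σ ha hk hθ hρr hA hM, ?_⟩
  rw [hM, Matrix.span_row_mul_of_isUnit hA]
  rfl

theorem stmt17_general {K L : Type*} [Field K] [Field L] [Algebra K L] [Fintype K] [Fintype L]
    (q m k r s : ℕ) (hq : Fintype.card K = q) (hm : Module.finrank K L = m)
    (hk : 0 < k) (hnm : k + r ≤ m) (hsm : Nat.Coprime s m) :
    ∃ X : Matrix (Fin k) (Fin r) L,
      (∀ (i i' : Fin k) (j j' : Fin r),
        (i : ℕ) + (j : ℕ) = (i' : ℕ) + (j' : ℕ) → X i j = X i' j') ∧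
      IsGabidulin K q s k (CX X) := by
  subst hq hm
  set σ := FiniteField.frobeniusAlgEquivOfAlgebraic K L ^ s
  let pb := Field.powerBasisOfFiniteOfSeparable K L
  obtain ⟨θ, hθ, a, ha⟩ := σ.exists_apply_eq_add_pow_mul
    (fun x => mem_range_algebraMap_of_zpowers_eq_top
      (FiniteField.zpowers_frobeniusAlgEquivOfAlgebraic_pow hsm)) pb.gen (N := k + r - 1)
    (by omega)
  obtain ⟨g, hg, hCX⟩ := exists_linearIndependent_span_mooreMatrix_eq_CX_hankel σ ha hk hθ
    (fun n hn hnk => pb.pow_apply_gen_ne_gen σ hn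
      (by rw [FiniteField.orderOf_frobeniusAlgEquivOfAlgebraic_pow hsm]; omega))
    (pb.linearIndependent_pow_fin (by omega))
  refine ⟨hankel k r a, fun i i' j j' h => by simp [hankel, h], g, ?_, ?_⟩
  · rw [rkq, finrank_span_eq_card hg, Fintype.card_fin]
  · rw [hCX]
    congr
    ext i j
    rw [← FiniteField.frobeniusAlgEquivOfAlgebraic_pow_apply, pow_mul]
    rfl

/-- for all `0 < k < n ≤ m` (here `n = k + r`) and every `s` coprime to `m`,
there exists a Hankel matrix `X` (the entry `X i j` depends only on `i + j`) such that
`C_X` is a generalized Gabidulin code of parameter `s`. -/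
theorem stmt17 {K L : Type*} [Field K] [Field L] [Algebra K L] [Fintype K] [Fintype L]
    (q m k r s : ℕ) (hq : Fintype.card K = q) (hm : Module.finrank K L = m)
    (hk : 0 < k) (hr : 0 < r) (hnm : k + r ≤ m) (hs : 0 < s) (hsm : Nat.Coprime s m) :
    ∃ X : Matrix (Fin k) (Fin r) L,
      (∀ (i i' : Fin k) (j j' : Fin r),
        (i : ℕ) + (j : ℕ) = (i' : ℕ) + (j' : ℕ) → X i j = X i' j') ∧
      IsGabidulin K q s k (CX X) :=
  stmt17_general q m k r s hq hm hk hnm hsm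
end
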